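/- For g ≥ 2, maps α_i : {0,…,g−1} → ℝ, indices i, j ≥ 0, integers 0 ≤ m < n ≤ g−1 (with n < g), and β ∈ ℝ, one has |Σ_{0≤k<g} e(α_{i+j}(k) − βk)| ≤ g·exp(−(8/g)·‖α_{i+j}(m) − α_{i+j}(n) − β(m−n)‖²), where ‖x‖ denotes the distance from x to the nearest integer. -/

import Mathlib

/-- `e(t) = exp(2πit)`. -/
noncomputable def eC (t : ℝ) : ℂ := Complex.exp (2 * (Real.pi : ℂ) * Complex.I * (t : ℂ))

/-- Distance from `x` to the nearest integer. -/
noncomputable def nint (x : ℝ) : ℝ := |x - round x|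

/-!
The terms of the sum at `k = m` and `k = n` differ by the phase `e(δ)`, with
`δ = α(m) - α(n) - β(m - n)`, so together they have modulus `|1 + e(δ)| = 2|cos πδ|`.
Concavity of `sin` gives `|cos πδ| ≤ 1 - 4‖δ‖²`, and the remaining `g - 2` terms have
modulus `1`. Hence the sum is at most `g - 8‖δ‖² = g(1 - 8‖δ‖²/g) ≤ g·exp(-8‖δ‖²/g)`.
-/

open Real Finset

lemma eC_add (a b : ℝ) : eC (a + b) = eC a * eC b := by
  rw [eC, eC, eC, ← Complex.exp_add]; push_cast; ring_nf

lemma norm_eC (t : ℝ) : ‖eC t‖ = 1 := by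
  rw [eC, show 2 * (π : ℂ) * Complex.I * t = (2 * π * t : ℝ) * Complex.I by push_cast; ring]
  exact Complex.norm_exp_ofReal_mul_I _

lemma eC_intCast (k : ℤ) : eC k = 1 := by
  rw [eC, ← Complex.exp_int_mul_two_pi_mul_I k]; push_cast; ring_nf

lemma eC_sub_round (x : ℝ) : eC (x - round x) = eC x := by
  rw [sub_eq_add_neg, eC_add, ← Int.cast_neg, eC_intCast, mul_one]

lemma norm_one_add_eC (x : ℝ) : ‖1 + eC x‖ = 2 * |cos (π * x)| := by
  have h : 1 + eC x = eC (x / 2) * (2 * (cos (π * x) : ℂ)) := by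
    rw [Complex.ofReal_cos, Complex.two_cos, eC, eC, mul_add, ← Complex.exp_add,
      ← Complex.exp_add]
    push_cast; ring_nf; rw [Complex.exp_zero, add_comm]
  rw [h, norm_mul, norm_eC, one_mul, norm_mul, Complex.norm_ofNat, Complex.norm_real,
    Real.norm_eq_abs]

lemma sqrt_two_mul_le_sin_pi_mul_div_two {t : ℝ} (h0 : 0 ≤ t) (h1 : t ≤ 1 / 2) :
    √2 * t ≤ sin (π * t / 2) := by
  have hpi := pi_pos
  have chord := strictConcaveOn_sin_Icc.concaveOn.2 (⟨le_rfl, hpi.le⟩ : (0 : ℝ) ∈ Set.Icc 0 π)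
    (⟨by positivity, by linarith⟩ : π / 4 ∈ Set.Icc 0 π)
    (by linarith : 0 ≤ 1 - 2 * t) (by linarith : 0 ≤ 2 * t) (by ring)
  simp only [smul_eq_mul, sin_zero, mul_zero, zero_add, sin_pi_div_four] at chord
  calc √2 * t = 2 * t * (√2 / 2) := by ring
    _ ≤ sin (2 * t * (π / 4)) := chord
    _ = sin (π * t / 2) := by ring_nf

lemma cos_pi_mul_le_one_sub_four_mul_sq {t : ℝ} (h0 : 0 ≤ t) (h1 : t ≤ 1 / 2) :
    cos (π * t) ≤ 1 - 4 * t ^ 2 := by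
  have hsq : 2 * t ^ 2 ≤ sin (π * t / 2) ^ 2 := by
    calc 2 * t ^ 2 = (√2 * t) ^ 2 := by rw [mul_pow, sq_sqrt zero_le_two]
      _ ≤ _ := pow_le_pow_left₀ (by positivity) (sqrt_two_mul_le_sin_pi_mul_div_two h0 h1) 2
  have hcos : cos (π * t) = 1 - 2 * sin (π * t / 2) ^ 2 := by
    rw [← cos_two_mul_eq_one_sub]; ring_nf
  linarith

lemma norm_one_add_eC_le (x : ℝ) : ‖1 + eC x‖ ≤ 2 * (1 - 4 * nint x ^ 2) := by
  set r := x - round x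
  have hr : |r| ≤ 1 / 2 := abs_sub_round x
  have hcos : |cos (π * r)| = cos (π * |r|) := by
    rw [← abs_of_nonneg pi_pos.le, ← abs_mul, cos_abs, abs_of_nonneg pi_pos.le,
      abs_of_nonneg (cos_nonneg_of_mem_Icc ⟨by nlinarith [neg_abs_le r, pi_pos],
        by nlinarith [le_abs_self r, pi_pos]⟩)]
  rw [← eC_sub_round, norm_one_add_eC, hcos]
  gcongr
  exact cos_pi_mul_le_one_sub_four_mul_sq (abs_nonneg r) hr

lemma norm_eC_add_eC_le (a b : ℝ) : ‖eC a + eC b‖ ≤ 2 * (1 - 4 * nint (a - b) ^ 2) := by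
  rw [show eC a = eC b * eC (a - b) by rw [← eC_add, add_sub_cancel], ← mul_add_one,
    norm_mul, norm_eC, one_mul, add_comm]
  exact norm_one_add_eC_le (a - b)

lemma norm_sum_le_card_sub_two_add {ι E : Type*} [SeminormedAddCommGroup E] [DecidableEq ι]
    {s : Finset ι} {f : ι → E} (hf : ∀ k ∈ s, ‖f k‖ ≤ 1) {m n : ι} (hm : m ∈ s) (hn : n ∈ s)
    (hmn : m ≠ n) : ‖∑ k ∈ s, f k‖ ≤ #s - 2 + ‖f m + f n‖ := by
  have hpair : {m, n} ⊆ s := insert_subset hm (singleton_subset_iff.2 hn)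
  have hrest : ‖∑ k ∈ s \ {m, n}, f k‖ ≤ #s - 2 := by
    calc ‖∑ k ∈ s \ {m, n}, f k‖ ≤ ∑ k ∈ s \ {m, n}, ‖f k‖ := norm_sum_le _ _
      _ ≤ #(s \ {m, n}) := by
        simpa using sum_le_sum fun k hk => hf k (sdiff_subset hk)
      _ = #s - 2 := by
        have hcard := card_sdiff_add_card_eq_card hpair
        rw [card_pair hmn] at hcard
        rw [eq_sub_iff_add_eq]
        exact_mod_cast hcard
  calc ‖∑ k ∈ s, f k‖ = ‖∑ k ∈ s \ {m, n}, f k + (f m + f n)‖ := by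
        rw [← sum_sdiff hpair, sum_pair hmn]
    _ ≤ #s - 2 + ‖f m + f n‖ := (norm_add_le _ _).trans (add_le_add_left hrest _)

theorem phi_bound_general (g : ℕ) (α : ℕ → ℕ → ℝ) (i j m n : ℕ)
    (hmn : m < n) (hn : n < g) (β : ℝ) :
    ‖∑ k ∈ Finset.range g, eC (α (i + j) k - β * k)‖ ≤
      (g : ℝ) * Real.exp (-(8 / (g : ℝ)) *
        nint (α (i + j) m - α (i + j) n - β * ((m : ℝ) - n)) ^ 2) := by
  set A := α (i + j)
  set t := nint (A m - A n - β * ((m : ℝ) - n))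
  have hg : (0 : ℝ) < g := by exact_mod_cast Nat.zero_lt_of_lt hn
  calc ‖∑ k ∈ range g, eC (A k - β * k)‖
      ≤ g - 2 + ‖eC (A m - β * m) + eC (A n - β * n)‖ := by
        simpa using norm_sum_le_card_sub_two_add (fun k _ => (norm_eC (A k - β * k)).le)
          (mem_range.2 (hmn.trans hn)) (mem_range.2 hn) hmn.ne
    _ ≤ g - 2 + 2 * (1 - 4 * t ^ 2) := by
        gcongr
        have h := norm_eC_add_eC_le (A m - β * m) (A n - β * n)
        rwa [show A m - β * m - (A n - β * n) = A m - A n - β * ((m : ℝ) - n) by ring] at h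
    _ = g * (1 - 8 / g * t ^ 2) := by field_simp; ring
    _ ≤ g * exp (-(8 / g) * t ^ 2) := by
        gcongr
        rw [neg_mul]
        exact one_sub_le_exp_neg _

theorem phi_bound (g : ℕ) (hg : 2 ≤ g) (α : ℕ → ℕ → ℝ) (i j m n : ℕ)
    (hmn : m < n) (hn : n < g) (β : ℝ) :
    ‖∑ k ∈ Finset.range g, eC (α (i + j) k - β * k)‖ ≤
      (g : ℝ) * Real.exp (-(8 / (g : ℝ)) *
        nint (α (i + j) m - α (i + j) n - β * ((m : ℝ) - n)) ^ 2) :=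
  phi_bound_general g α i j m n hmn hn β
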